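/- Let Q on Fin 2 be the family Q_{11}^{12}=Q_{11}^{21}=αr, Q_{12}^{11}=Q_{21}^{11}=r, Q_{12}^{12}=Q_{21}^{21}=Q_{12}^{21}=Q_{21}^{12}=d, Q_{11}^{22}=αd, Q_{22}^{11}=d/α, Q_{12}^{22}=Q_{21}^{22}=−αr, Q_{22}^{21}=Q_{22}^{12}=−r, Q_{11}^{11}=Q_{22}^{22}=1−d, where r² = d/(2α) − d²/α and α ≠ 0. Then Q satisfies the symmetry Q_{ji}^{st} = Q_{ij}^{ts} for all i,j,s,t, and the matrix B_{jk} := Σ_i Q_{ij}^{ki} equals the 2×2 identity matrix. -/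

import Mathlib

open BigOperators

/-- The family of structure constants `(24)` of the paper:
`a = αr, b = r, c = d, f = αd, y = d/α`. -/
noncomputable def Qfam (d α r : ℂ) (i j s t : Fin 2) : ℂ :=
  match i.1, j.1, s.1, t.1 with
  | 0, 0, 0, 0 => 1 - d
  | 0, 0, 0, 1 => α * r
  | 0, 0, 1, 0 => α * r
  | 0, 0, 1, 1 => α * d
  | 0, 1, 0, 0 => r
  | 0, 1, 0, 1 => d
  | 0, 1, 1, 0 => d
  | 0, 1, 1, 1 => -(α * r)
  | 1, 0, 0, 0 => r
  | 1, 0, 0, 1 => d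
  | 1, 0, 1, 0 => d
  | 1, 0, 1, 1 => -(α * r)
  | 1, 1, 0, 0 => d / α
  | 1, 1, 0, 1 => -r
  | 1, 1, 1, 0 => -r
  | _, _, _, _ => 1 - d

theorem Qfam_swap (d α r : ℂ) (i j s t : Fin 2) :
    Qfam d α r j i s t = Qfam d α r i j t s := by
  fin_cases i <;> fin_cases j <;> fin_cases s <;> fin_cases t <;> rfl

theorem sum_Qfam_eq_one_apply (d α r : ℂ) (j k : Fin 2) :
    ∑ i, Qfam d α r i j k i = (1 : Matrix (Fin 2) (Fin 2) ℂ) j k := by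
  rw [Fin.sum_univ_two]
  fin_cases j <;> fin_cases k <;> simp [Qfam]

theorem family_symmetry_and_projector_identity_general
    (d α r : ℂ) :
    (∀ i j s t : Fin 2, Qfam d α r j i s t = Qfam d α r i j t s) ∧
    (Matrix.of fun j k : Fin 2 => ∑ i, Qfam d α r i j k i) = 1 :=
  ⟨Qfam_swap d α r, Matrix.ext (sum_Qfam_eq_one_apply d α r)⟩

theorem family_symmetry_and_projector_identity
    (d α r : ℂ) (hα : α ≠ 0)
    (hr : r ^ 2 = d / (2 * α) - d ^ 2 / α) :
    (∀ i j s t : Fin 2, Qfam d α r j i s t = Qfam d α r i j t s) ∧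
    (Matrix.of fun j k : Fin 2 => ∑ i, Qfam d α r i j k i) = 1 :=
  family_symmetry_and_projector_identity_general d α r
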